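/- G_{f₀} is chaotic in the sense of Devaney on (𝒳,d): it is topologically transitive, its periodic points are dense, and it has sensitive dependence on initial conditions. -/

import Mathlib

open scoped BigOperators
open MeasureTheory ProbabilityTheory

namespace CI

/-- Strategies: sequences with values in {1,…,N}, encoded as `Fin N`. -/
abbrev Strat (N : ℕ) := ℕ → Fin N
/-- States of the system: boolean vectors of length N. -/
abbrev CState (N : ℕ) := Fin N → Bool
/-- The phase space 𝒳 = {1,…,N}^ℕ × 𝔹^N. -/
abbrev Pt (N : ℕ) := Strat N × CState N

/-- d_e : sum of the discrete metric over the coordinates. -/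
noncomputable def de {N : ℕ} (E F : CState N) : ℝ :=
  ∑ k : Fin N, if E k = F k then (0 : ℝ) else 1

/-- d_s(S,Š) = (9/N) Σ_{k≥1} |S^k − Š^k| / 10^k  (indices shifted to start at 0). -/
noncomputable def ds (N : ℕ) (S T : Strat N) : ℝ :=
  (9 / N) * ∑' k : ℕ, |((S k : ℝ)) - ((T k : ℝ))| / 10 ^ (k + 1)

/-- The distance d = d_e + d_s on 𝒳. -/
noncomputable def dC {N : ℕ} (p q : Pt N) : ℝ := de p.2 q.2 + ds N p.1 q.1

/-- Flip bit k of the state E. -/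
def bflip {N : ℕ} (k : Fin N) (E : CState N) : CState N :=
  fun j => if j = k then !(E j) else E j

/-- F_f(k,E): equal to E except possibly in coordinate k, where it is f(E)_k. -/
def Ff {N : ℕ} (f : CState N → CState N) (k : Fin N) (E : CState N) : CState N :=
  fun j => if j = k then f E k else E j

/-- The chaotic-iterations map G_f(S,E) = (σ(S), F_f(S^0,E)). -/
def Gf {N : ℕ} (f : CState N → CState N) (p : Pt N) : Pt N :=
  (fun n => p.1 (n + 1), Ff f (p.1 0) p.2)

/-- The vectorial negation f₀. -/
def f0 {N : ℕ} (E : CState N) : CState N := fun j => !(E j)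

/-- G_{f₀}. -/
def G0 {N : ℕ} : Pt N → Pt N := Gf f0

/-- Open ball for the distance dC. -/
def ballC {N : ℕ} (x : Pt N) (r : ℝ) : Set (Pt N) := {y | dC x y < r}

/-- Open sets of the metric space (𝒳,d). -/
def IsOpenC {N : ℕ} (U : Set (Pt N)) : Prop := ∀ x ∈ U, ∃ ε > 0, ballC x ε ⊆ U

/-- Iterating the flip-one-coordinate dynamics along a strategy. -/
def runCI {N : ℕ} (S : ℕ → Fin N) (E : CState N) : ℕ → CState N
  | 0 => E
  | n + 1 => bflip (S n) (runCI S E n)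

/-- The CIDS (cover-dependent) strategy: S^k = k if k ≤ N and X_k = 1, else S^k = 1
(indices encoded from 0, so "1" is `0 : Fin N`). -/
def cids {N : ℕ} [NeZero N] (X : CState N) : ℕ → Fin N :=
  fun k => if h : k < N then (if X ⟨k, h⟩ then ⟨k, h⟩ else 0) else 0

/-!
Under `G_{f₀}` each step flips the bit named by the current strategy letter, so
`G_{f₀}ⁿ(S, E) = (σⁿ S, E with the bits S⁰, …, Sⁿ⁻¹ flipped)`, while two points with the same
state whose strategies agree on the first `M` letters are at distance at most `10⁻ᴹ`.
Transitivity: keep the first `M` letters of a point of `U`, then flip the bits in which the state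
reached differs from that of a point of `V`, then follow the strategy of that point.
Periodic points: repeat the first `M` letters of `S` with period `m`; after `2m` steps every bit
has been flipped an even number of times. Sensitivity: change the letter of index `M`; after
`M + 1` steps the two states differ in a bit, so the points are at distance at least `1`.
-/

variable {N : ℕ}

lemma bflip_bflip (a : Fin N) (E : CState N) : bflip a (bflip a E) = E := by
  funext j; simp only [bflip]; split_ifs <;> simp

lemma bflip_comm (a b : Fin N) (E : CState N) :
    bflip a (bflip b E) = bflip b (bflip a E) := by
  funext j; simp only [bflip]; split_ifs <;> simp_all

lemma bflip_ne_bflip {a b : Fin N} (hab : a ≠ b) (E : CState N) : bflip a E ≠ bflip b E := by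
  intro h
  have := congrFun h a
  simp [bflip, hab] at this

lemma runCI_bflip (S : Strat N) (a : Fin N) (E : CState N) (n : ℕ) :
    runCI S (bflip a E) n = bflip a (runCI S E n) := by
  induction n with
  | zero => rfl
  | succ n ih => simp only [runCI, ih, bflip_comm]

lemma runCI_runCI (S : Strat N) (E : CState N) (n : ℕ) :
    runCI S (runCI S E n) n = E := by
  induction n generalizing E with
  | zero => rfl
  | succ n ih => simp only [runCI, runCI_bflip, bflip_bflip, ih]

lemma runCI_congr {S T : Strat N} {E : CState N} {n : ℕ} (h : ∀ k < n, S k = T k) :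
    runCI S E n = runCI T E n := by
  induction n with
  | zero => rfl
  | succ n ih => simp only [runCI, h n n.lt_succ_self, ih fun k hk => h k (by omega)]

lemma Ff_f0 (k : Fin N) (E : CState N) : Ff f0 k E = bflip k E := by
  funext j; by_cases h : j = k <;> simp [Ff, f0, bflip, h]

lemma G0_mk (S : Strat N) (E : CState N) : G0 (S, E) = (fun k => S (k + 1), bflip (S 0) E) := by
  simp only [G0, Gf, Ff_f0]

lemma G0_iterate (S : Strat N) (E : CState N) (n : ℕ) :
    G0^[n] (S, E) = (fun k => S (k + n), runCI S E n) := by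
  induction n with
  | zero => rfl
  | succ n ih =>
    rw [Function.iterate_succ_apply', ih, G0_mk]
    simp only [runCI, Nat.zero_add, Prod.mk.injEq, and_true]
    funext k; rw [Nat.add_right_comm, Nat.add_assoc]

lemma G0_iterate_two_mul_of_periodic {T : Strat N} {m : ℕ} (hT : Function.Periodic T m)
    (E : CState N) : G0^[2 * m] (T, E) = (T, E) := by
  have hshift : (fun k => T (k + m)) = T := funext hT
  rw [two_mul, Function.iterate_add_apply, G0_iterate T E m, hshift, G0_iterate, hshift,
    runCI_runCI]

def splice (S : Strat N) (M : ℕ) (R : Strat N) : Strat N :=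
  fun k => if k < M then S k else R (k - M)

lemma G0_iterate_splice (S R : Strat N) (E : CState N) (M : ℕ) :
    G0^[M] (splice S M R, E) = (R, runCI S E M) := by
  rw [G0_iterate, runCI_congr (S := splice S M R) (T := S) fun k hk => if_pos hk]
  congr 1
  funext k
  simp [splice]

/-- Flip, one at a time, the coordinates where `C` and `F` differ. -/
lemma exists_iterate_G0_eq (C F : CState N) (T : Strat N) :
    ∃ n R, G0^[n] (R, C) = (T, F) := by
  suffices key : ∀ s : Finset (Fin N), ∀ C : CState N, (∀ j ∉ s, C j = F j) →
      ∃ n R, G0^[n] (R, C) = (T, F) from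
    key Finset.univ C fun j hj => absurd (Finset.mem_univ j) hj
  intro s
  induction s using Finset.induction_on with
  | empty => exact fun C hC => ⟨0, T, by rw [funext fun j => hC j (Finset.notMem_empty j)]; rfl⟩
  | insert a s _ ih =>
    intro C hC
    by_cases hCa : C a = F a
    · refine ih C fun j hj => ?_
      by_cases hja : j = a
      · rwa [hja]
      · exact hC j (by simp [hja, hj])
    · obtain ⟨n, R, hR⟩ := ih (bflip a C) fun j hj => by
        by_cases hja : j = a
        · subst hja; simpa [bflip] using Bool.eq_not_of_ne hCa
        · simpa [bflip, hja] using hC j (by simp [hja, hj])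
      refine ⟨n + 1, Stream'.cons a R, ?_⟩
      rwa [Function.iterate_succ_apply, G0_mk (Stream'.cons a R) C]

lemma de_self (E : CState N) : de E E = 0 := by simp [de]

lemma one_le_de_of_ne {E F : CState N} (h : E ≠ F) : 1 ≤ de E F := by
  obtain ⟨j, hj⟩ := Function.ne_iff.mp h
  calc (1 : ℝ) = if E j = F j then 0 else 1 := (if_neg hj).symm
    _ ≤ de E F := Finset.single_le_sum (f := fun k => if E k = F k then (0 : ℝ) else 1)
      (fun k _ => by split <;> norm_num) (Finset.mem_univ j)

lemma ds_nonneg (S T : Strat N) : 0 ≤ ds N S T :=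
  mul_nonneg (by positivity) (tsum_nonneg fun k => by positivity)

lemma de_le_dC (S T : Strat N) (E F : CState N) : de E F ≤ dC (S, E) (T, F) :=
  le_add_of_nonneg_right (ds_nonneg _ _)

lemma ds_summand_le (S T : Strat N) (k : ℕ) :
    |(S k : ℝ) - T k| / 10 ^ (k + 1) ≤ N * (1 / 10) ^ (k + 1) := by
  have h : |(S k : ℝ) - T k| ≤ N :=
    (abs_sub_lt_of_nonneg_of_lt (Nat.cast_nonneg _) (by exact_mod_cast (S k).isLt)
      (Nat.cast_nonneg _) (by exact_mod_cast (T k).isLt)).le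
  rw [one_div_pow, ← div_eq_mul_one_div]
  gcongr

lemma ds_le_of_eqOn (hN : 0 < N) {S T : Strat N} {M : ℕ} (h : ∀ k < M, S k = T k) :
    ds N S T ≤ (1 / 10) ^ M := by
  set a : ℕ → ℝ := fun k => |(S k : ℝ) - T k| / 10 ^ (k + 1)
  have hgeom : Summable fun k : ℕ => ((1 : ℝ) / 10) ^ k :=
    summable_geometric_of_lt_one (by norm_num) (by norm_num)
  have ha : Summable a := .of_nonneg_of_le (fun k => by positivity) (ds_summand_le S T)
    ((hgeom.mul_left ((N : ℝ) / 10)).congr (g := fun k => (N : ℝ) * (1 / 10) ^ (k + 1))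
      fun k => by ring)
  have hhead : ∑ k ∈ Finset.range M, a k = 0 :=
    Finset.sum_eq_zero fun k hk => by simp [a, h k (Finset.mem_range.mp hk)]
  have htail : ∑' k, a (k + M) ≤ ∑' k, N * (1 / 10) ^ (M + 1) * ((1 : ℝ) / 10) ^ k :=
    Summable.tsum_le_tsum (fun k => (ds_summand_le S T (k + M)).trans_eq (by ring))
      ((summable_nat_add_iff M).mpr ha) (hgeom.mul_left _)
  rw [tsum_mul_left, tsum_geometric_of_lt_one (by norm_num) (by norm_num)] at htail
  have hN' : (0 : ℝ) < N := by exact_mod_cast hN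
  calc ds N S T = 9 / N * ∑' k, a (k + M) := by
        rw [ds, ← ha.sum_add_tsum_nat_add M, hhead, zero_add]
    _ ≤ 9 / N * (N * (1 / 10) ^ (M + 1) * (1 - 1 / 10)⁻¹) := by gcongr
    _ = (1 / 10) ^ M := by field_simp; ring

lemma dC_lt_of_eqOn (hN : 0 < N) {S T : Strat N} (E : CState N) {M : ℕ} {ε : ℝ}
    (h : ∀ k < M, S k = T k) (hM : (1 / 10 : ℝ) ^ M < ε) : dC (S, E) (T, E) < ε := by
  rw [dC, de_self, zero_add]
  exact (ds_le_of_eqOn hN h).trans_lt hM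

lemma G0_transitive (hN : 0 < N) (U V : Set (Pt N)) (hU : IsOpenC U) (hUne : U.Nonempty)
    (hVne : V.Nonempty) : ∃ k : ℕ, ((G0^[k] '' U) ∩ V).Nonempty := by
  obtain ⟨⟨S, E⟩, hxU⟩ := hUne
  obtain ⟨⟨T, F⟩, hyV⟩ := hVne
  obtain ⟨ε, hε, hball⟩ := hU _ hxU
  obtain ⟨M, hM⟩ := exists_pow_lt_of_lt_one hε (by norm_num : (1 / 10 : ℝ) < 1)
  obtain ⟨n, R, hR⟩ := exists_iterate_G0_eq (runCI S E M) F T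
  refine ⟨n + M, (T, F), ⟨(splice S M R, E), hball ?_, ?_⟩, hyV⟩
  · exact dC_lt_of_eqOn hN E (fun k hk => (if_pos hk).symm) hM
  · rw [Function.iterate_add_apply, G0_iterate_splice, hR]

lemma G0_periodic_dense (hN : 0 < N) (x : Pt N) {ε : ℝ} (hε : 0 < ε) :
    ∃ y : Pt N, (∃ p : ℕ, 1 ≤ p ∧ G0^[p] y = y) ∧ dC x y < ε := by
  obtain ⟨S, E⟩ := x
  obtain ⟨M, hM⟩ := exists_pow_lt_of_lt_one hε (by norm_num : (1 / 10 : ℝ) < 1)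
  refine ⟨(fun k => S (k % (M + 1)), E),
    ⟨2 * (M + 1), by omega, G0_iterate_two_mul_of_periodic ((Nat.periodic_mod _).comp S) E⟩, ?_⟩
  exact dC_lt_of_eqOn hN E (fun k hk => by rw [Nat.mod_eq_of_lt (by omega)]) hM

lemma G0_sensitive (hN : 2 ≤ N) (x : Pt N) {ε : ℝ} (hε : 0 < ε) :
    ∃ y : Pt N, dC x y < ε ∧ ∃ n : ℕ, 1 / 2 < dC (G0^[n] x) (G0^[n] y) := by
  have : Nontrivial (Fin N) := Fin.nontrivial_iff_two_le.mpr hN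
  obtain ⟨S, E⟩ := x
  obtain ⟨M, hM⟩ := exists_pow_lt_of_lt_one hε (by norm_num : (1 / 10 : ℝ) < 1)
  obtain ⟨t, ht⟩ := exists_ne (S M)
  have hagree : ∀ k < M, S k = Function.update S M t k :=
    fun k hk => (Function.update_of_ne hk.ne _ _).symm
  refine ⟨(Function.update S M t, E), dC_lt_of_eqOn (by omega) E hagree hM, M + 1, ?_⟩
  have hstates : runCI S E (M + 1) ≠ runCI (Function.update S M t) E (M + 1) := by
    simp only [runCI, Function.update_self, ← runCI_congr hagree]
    exact bflip_ne_bflip ht.symm _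
  calc (1 / 2 : ℝ) < 1 := by norm_num
    _ ≤ de (runCI S E (M + 1)) (runCI (Function.update S M t) E (M + 1)) :=
      one_le_de_of_ne hstates
    _ ≤ _ := by rw [G0_iterate, G0_iterate]; exact de_le_dC _ _ _ _

theorem stmt14 {N : ℕ} (hN : 2 ≤ N) :
    (∀ U V : Set (Pt N), IsOpenC U → IsOpenC V → U.Nonempty → V.Nonempty →
      ∃ k : ℕ, ((G0^[k] '' U) ∩ V).Nonempty) ∧
    (∀ x : Pt N, ∀ ε > (0 : ℝ), ∃ y : Pt N,
      (∃ p : ℕ, 1 ≤ p ∧ G0^[p] y = y) ∧ dC x y < ε) ∧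
    (∃ δ > (0 : ℝ), ∀ x : Pt N, ∀ ε > (0 : ℝ), ∃ y : Pt N, dC x y < ε ∧
      ∃ n : ℕ, δ < dC (G0^[n] x) (G0^[n] y)) := by
  have hN0 : 0 < N := by omega
  exact ⟨fun U V hU _ hUne hVne => G0_transitive hN0 U V hU hUne hVne,
    fun x _ hε => G0_periodic_dense hN0 x hε,
    ⟨1 / 2, by norm_num, fun x _ hε => G0_sensitive hN x hε⟩⟩

end CI
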